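/- arXiv:math/0009215 — 3 statements merged into one kernel-verified Lean document; each statement's English description precedes it below -/
import Mathlib

section
/- Let D₁ ⊆ ℂ be a domain on which the Hahn and Kobayashi–Royden pseudometrics coincide (h_{D₁} ≡ κ_{D₁}). Then for any domain D₂ ⊆ ℂ, the Hahn and Kobayashi–Royden pseudometrics of the product coincide: h_{D₁×D₂} ≡ κ_{D₁×D₂}. -/
open Set Metric Complex

noncomputable section

/-- The open unit disc `E` in `ℂ`. -/
def unitDisc : Set ℂ := Metric.ball (0 : ℂ) 1

/-- The Kobayashi–Royden pseudometric of a set `D` in a complex normed space: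
`κ_D(z;X) = inf {|α| : ∃ holomorphic f : E → D, f(0) = z, α·f'(0) = X}`. -/
def kobayashi {V : Type*} [NormedAddCommGroup V] [NormedSpace ℂ V]
    (D : Set V) (z X : V) : ℝ :=
  sInf {r : ℝ | ∃ (α : ℂ) (f : ℂ → V), ‖α‖ = r ∧
    DifferentiableOn ℂ f unitDisc ∧ MapsTo f unitDisc D ∧
    f 0 = z ∧ α • deriv f 0 = X}

/-- The Hahn pseudometric of a set `D` in a complex normed space:
`h_D(z;X) = inf {|α| : ∃ injective holomorphic f : E → D, f(0) = z, α·f'(0) = X}`. -/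
def hahn {V : Type*} [NormedAddCommGroup V] [NormedSpace ℂ V]
    (D : Set V) (z X : V) : ℝ :=
  sInf {r : ℝ | ∃ (α : ℂ) (f : ℂ → V), ‖α‖ = r ∧
    DifferentiableOn ℂ f unitDisc ∧ MapsTo f unitDisc D ∧ InjOn f unitDisc ∧
    f 0 = z ∧ α • deriv f 0 = X}
/-! Always `κ ≤ h`. Conversely, let `f = (f₁, f₂)` be an analytic disc in `D₁ × D₂` through `z`
with `α f'(0) = X`. If `X₁ ≠ 0`, replace `f₁` by an injective disc in `D₁` that is almost
extremal for `h_{D₁}(z₁; X₁) = κ_{D₁}(z₁; X₁) ≤ |α|`; after reparametrising both components to a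
common coefficient, the pair is injective because its first component is. If `X₁ = 0 ≠ X₂`,
shrink `f₂` to a bounded disc `g` and take the graph-like disc `(z₁ + δ (g - z₂ - g'(0) ζ), g)`,
whose first component has vanishing derivative at `0`, stays in `D₁` for small `δ` and separates
the points that `g` identifies. -/

/-- `f` is a competitor, with coefficient `α`, in the infimum defining `kobayashi D z X`;
it competes for `hahn D z X` when it is moreover injective on `unitDisc`. -/
structure IsAnalyticDisc {V : Type*} [NormedAddCommGroup V] [NormedSpace ℂ V]
    (D : Set V) (z X : V) (α : ℂ) (f : ℂ → V) : Prop where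
  differentiableOn : DifferentiableOn ℂ f unitDisc
  mapsTo : MapsTo f unitDisc D
  map_zero : f 0 = z
  smul_deriv : α • deriv f 0 = X

lemma mem_unitDisc {ζ : ℂ} : ζ ∈ unitDisc ↔ ‖ζ‖ < 1 := mem_ball_zero_iff

lemma zero_mem_unitDisc : (0 : ℂ) ∈ unitDisc := mem_ball_self one_pos

lemma mapsTo_mul_unitDisc {c : ℂ} (hc : ‖c‖ ≤ 1) : MapsTo (c * ·) unitDisc unitDisc :=
  fun ζ hζ => mem_unitDisc.mpr <| (norm_mul c ζ).trans_lt <|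
    mul_lt_one_of_nonneg_of_lt_one_right hc (norm_nonneg ζ) (mem_unitDisc.mp hζ)

lemma Set.InjOn.comp_mul_unitDisc {V : Type*} {u : ℂ → V} (hu : InjOn u unitDisc) {c : ℂ}
    (hc : ‖c‖ ≤ 1) (hc₀ : c ≠ 0) : InjOn (fun ζ => u (c * ζ)) unitDisc :=
  hu.comp (mul_right_injective₀ hc₀).injOn (mapsTo_mul_unitDisc hc)

lemma ContinuousOn.exists_bound_comp_mul {V : Type*} [NormedAddCommGroup V] {f : ℂ → V}
    (hf : ContinuousOn f unitDisc) {t : ℝ} (ht₀ : 0 ≤ t) (ht : t < 1) :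
    ∃ M, ∀ ζ ∈ unitDisc, ‖f (t * ζ)‖ ≤ M := by
  obtain ⟨M, hM⟩ := (isCompact_closedBall (0 : ℂ) t).exists_bound_of_continuousOn
    (hf.mono (closedBall_subset_ball ht))
  refine ⟨M, fun ζ hζ => hM _ ?_⟩
  rw [mem_closedBall_zero_iff, norm_mul, Complex.norm_of_nonneg ht₀]
  exact mul_le_of_le_one_right ht₀ (mem_unitDisc.mp hζ).le

namespace IsAnalyticDisc

variable {V W : Type*} [NormedAddCommGroup V] [NormedSpace ℂ V]
  [NormedAddCommGroup W] [NormedSpace ℂ W] {D : Set V} {z X : V} {α : ℂ} {f : ℂ → V}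

lemma mem (h : IsAnalyticDisc D z X α f) : z ∈ D :=
  h.map_zero ▸ h.mapsTo zero_mem_unitDisc

lemma differentiableAt (h : IsAnalyticDisc D z X α f) : DifferentiableAt ℂ f 0 :=
  h.differentiableOn.differentiableAt (isOpen_ball.mem_nhds zero_mem_unitDisc)

lemma coeff_ne_zero (h : IsAnalyticDisc D z X α f) (hX : X ≠ 0) : α ≠ 0 :=
  left_ne_zero_of_smul (h.smul_deriv ▸ hX)

lemma deriv_ne_zero (h : IsAnalyticDisc D z X α f) (hX : X ≠ 0) : deriv f 0 ≠ 0 :=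
  right_ne_zero_of_smul (h.smul_deriv ▸ hX)

lemma kobayashi_le (h : IsAnalyticDisc D z X α f) : kobayashi D z X ≤ ‖α‖ :=
  csInf_le ⟨0, by rintro _ ⟨β, -, rfl, -⟩; exact norm_nonneg β⟩
    ⟨α, f, rfl, h.1, h.2, h.3, h.4⟩

lemma hahn_le (h : IsAnalyticDisc D z X α f) (hf : InjOn f unitDisc) : hahn D z X ≤ ‖α‖ :=
  csInf_le ⟨0, by rintro _ ⟨β, -, rfl, -⟩; exact norm_nonneg β⟩
    ⟨α, f, rfl, h.1, h.2, hf, h.3, h.4⟩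

lemma smul (h : IsAnalyticDisc D z X α f) (c : ℂ) : IsAnalyticDisc D z (c • X) (c * α) f :=
  ⟨h.1, h.2, h.3, by rw [mul_smul, h.smul_deriv]⟩

lemma comp_mul (h : IsAnalyticDisc D z X α f) {c β : ℂ} (hc : ‖c‖ ≤ 1) (hβ : β * c = α) :
    IsAnalyticDisc D z X β (fun ζ => f (c * ζ)) where
  differentiableOn := h.differentiableOn.comp (differentiable_id.const_mul c).differentiableOn
    (mapsTo_mul_unitDisc hc)
  mapsTo := h.mapsTo.comp (mapsTo_mul_unitDisc hc)
  map_zero := by rw [mul_zero, h.map_zero]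
  smul_deriv := by
    rw [deriv_comp_mul_left c f 0, mul_zero, smul_smul, hβ, h.smul_deriv]

lemma prod {D' : Set W} {z' X' : W} {g : ℂ → W} (hf : IsAnalyticDisc D z X α f)
    (hg : IsAnalyticDisc D' z' X' α g) :
    IsAnalyticDisc (D ×ˢ D') (z, z') (X, X') α (fun ζ => (f ζ, g ζ)) where
  differentiableOn := hf.differentiableOn.prodMk hg.differentiableOn
  mapsTo := hf.mapsTo.prodMk hg.mapsTo
  map_zero := by rw [hf.map_zero, hg.map_zero]
  smul_deriv := by
    rw [(hf.differentiableAt.hasDerivAt.prodMk hg.differentiableAt.hasDerivAt).deriv,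
      Prod.smul_mk, hf.smul_deriv, hg.smul_deriv]

lemma fst {D' : Set W} {z X : V × W} {f : ℂ → V × W} (h : IsAnalyticDisc (D ×ˢ D') z X α f) :
    IsAnalyticDisc D z.1 X.1 α (fun ζ => (f ζ).1) where
  differentiableOn := h.differentiableOn.fst
  mapsTo := fun _ hζ => (h.mapsTo hζ).1
  map_zero := by rw [h.map_zero]
  smul_deriv := by
    have hd : HasDerivAt (fun ζ => (f ζ).1) (deriv f 0).1 0 :=
      (ContinuousLinearMap.fst ℂ V W).hasFDerivAt.comp_hasDerivAt 0 h.differentiableAt.hasDerivAt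
    rw [hd.deriv, ← h.smul_deriv, Prod.smul_fst]

lemma snd {D' : Set W} {z X : V × W} {f : ℂ → V × W} (h : IsAnalyticDisc (D ×ˢ D') z X α f) :
    IsAnalyticDisc D' z.2 X.2 α (fun ζ => (f ζ).2) where
  differentiableOn := h.differentiableOn.snd
  mapsTo := fun _ hζ => (h.mapsTo hζ).2
  map_zero := by rw [h.map_zero]
  smul_deriv := by
    have hd : HasDerivAt (fun ζ => (f ζ).2) (deriv f 0).2 0 :=
      (ContinuousLinearMap.snd ℂ V W).hasFDerivAt.comp_hasDerivAt 0 h.differentiableAt.hasDerivAt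
    rw [hd.deriv, ← h.smul_deriv, Prod.smul_snd]

end IsAnalyticDisc

section Pseudometrics

variable {V : Type*} [NormedAddCommGroup V] [NormedSpace ℂ V] {D : Set V} {z X : V}

lemma exists_isAnalyticDisc_injOn_of_ne_zero (hD : IsOpen D) (hz : z ∈ D) (hX : X ≠ 0) :
    ∃ α f, IsAnalyticDisc D z X α f ∧ InjOn f unitDisc := by
  obtain ⟨ρ, hρ, hball⟩ := Metric.isOpen_iff.mp hD z hz
  obtain ⟨s, hs, hsρ⟩ : ∃ s : ℝ, 0 < s ∧ s * ‖X‖ < ρ :=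
    ⟨ρ / (2 * ‖X‖), by positivity, by field_simp; linarith⟩
  have hs' : (s : ℂ) ≠ 0 := by exact_mod_cast hs.ne'
  have hderiv : HasDerivAt (fun ζ : ℂ => z + (s * ζ) • X) ((s : ℂ) • X) 0 := by
    simpa using (((hasDerivAt_id (0 : ℂ)).const_mul (s : ℂ)).smul_const X).const_add z
  refine ⟨(s : ℂ)⁻¹, fun ζ => z + (s * ζ) • X, ⟨by fun_prop, ?_, by simp, ?_⟩, ?_⟩
  · intro ζ hζ
    apply hball
    rw [mem_ball, dist_eq_norm, add_sub_cancel_left, norm_smul, norm_mul,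
      Complex.norm_of_nonneg hs.le]
    calc s * ‖ζ‖ * ‖X‖ ≤ s * ‖X‖ := by
          gcongr; exact mul_le_of_le_one_right hs.le (mem_unitDisc.mp hζ).le
      _ < ρ := hsρ
  · rw [hderiv.deriv, smul_smul, inv_mul_cancel₀ hs', one_smul]
  · intro a _ b _ hab
    simpa [hs', hX] using hab

lemma exists_isAnalyticDisc_injOn_zero [Nontrivial V] (hD : IsOpen D) (hz : z ∈ D) :
    ∃ f, IsAnalyticDisc D z 0 0 f ∧ InjOn f unitDisc := by
  obtain ⟨v, hv⟩ := exists_ne (0 : V)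
  obtain ⟨α, f, hf, hinj⟩ := exists_isAnalyticDisc_injOn_of_ne_zero hD hz hv
  exact ⟨f, by simpa using hf.smul 0, hinj⟩

lemma exists_isAnalyticDisc_injOn [Nontrivial V] (hD : IsOpen D) (hz : z ∈ D) (X : V) :
    ∃ α f, IsAnalyticDisc D z X α f ∧ InjOn f unitDisc := by
  rcases eq_or_ne X 0 with rfl | hX
  · exact ⟨0, exists_isAnalyticDisc_injOn_zero hD hz⟩
  · exact exists_isAnalyticDisc_injOn_of_ne_zero hD hz hX

lemma hahn_zero [Nontrivial V] (hD : IsOpen D) (hz : z ∈ D) : hahn D z 0 = 0 := by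
  obtain ⟨f, hf, hinj⟩ := exists_isAnalyticDisc_injOn_zero hD hz
  refine le_antisymm (by simpa using hf.hahn_le hinj) (Real.sInf_nonneg ?_)
  rintro _ ⟨β, -, rfl, -⟩
  exact norm_nonneg β

lemma exists_isAnalyticDisc_injOn_lt_of_hahn_lt
    (hne : ∃ α f, IsAnalyticDisc D z X α f ∧ InjOn f unitDisc) {c : ℝ} (h : hahn D z X < c) :
    ∃ α f, IsAnalyticDisc D z X α f ∧ InjOn f unitDisc ∧ ‖α‖ < c := by
  obtain ⟨α, f, hf, hinj⟩ := hne
  obtain ⟨_, ⟨β, g, rfl, hg, hgD, hginj, hg₀, hgX⟩, hlt⟩ :=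
    exists_lt_of_csInf_lt (by exact ⟨_, α, f, rfl, hf.1, hf.2, hinj, hf.3, hf.4⟩) h
  exact ⟨β, g, ⟨hg, hgD, hg₀, hgX⟩, hginj, hlt⟩

lemma le_kobayashi (hne : ∃ α f, IsAnalyticDisc D z X α f) {c : ℝ}
    (h : ∀ α f, IsAnalyticDisc D z X α f → c ≤ ‖α‖) : c ≤ kobayashi D z X := by
  obtain ⟨α, f, hf⟩ := hne
  refine le_csInf ⟨_, α, f, rfl, hf.1, hf.2, hf.3, hf.4⟩ ?_
  rintro _ ⟨β, g, rfl, hg, hgD, hg₀, hgX⟩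
  exact h β g ⟨hg, hgD, hg₀, hgX⟩

lemma kobayashi_le_hahn (hne : ∃ α f, IsAnalyticDisc D z X α f ∧ InjOn f unitDisc) :
    kobayashi D z X ≤ hahn D z X := by
  obtain ⟨α, f, hf, hinj⟩ := hne
  refine le_csInf ⟨_, α, f, rfl, hf.1, hf.2, hinj, hf.3, hf.4⟩ ?_
  rintro _ ⟨β, g, rfl, hg, hgD, -, hg₀, hgX⟩
  exact IsAnalyticDisc.kobayashi_le ⟨hg, hgD, hg₀, hgX⟩

end Pseudometrics

lemma hahn_prod_le_max {V W : Type*} [NormedAddCommGroup V] [NormedSpace ℂ V]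
    [NormedAddCommGroup W] [NormedSpace ℂ W] {D₁ : Set V} {D₂ : Set W} {z₁ X₁ : V} {z₂ X₂ : W}
    {α : ℂ} {g : ℂ → W} (hD₁ : IsOpen D₁) (hz₁ : z₁ ∈ D₁) (hX₁ : X₁ ≠ 0)
    (hg : IsAnalyticDisc D₂ z₂ X₂ α g) (hα : α ≠ 0) :
    hahn (D₁ ×ˢ D₂) (z₁, z₂) (X₁, X₂) ≤ max (hahn D₁ z₁ X₁) ‖α‖ := by
  refine le_of_forall_pos_lt_add fun ε hε => ?_
  obtain ⟨α₁, u, hu, hinj, hα₁ε⟩ := exists_isAnalyticDisc_injOn_lt_of_hahn_lt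
    (exists_isAnalyticDisc_injOn_of_ne_zero hD₁ hz₁ hX₁) (lt_add_of_pos_right _ hε)
  set b := max ‖α₁‖ ‖α‖
  have hb : 0 < b := lt_max_of_lt_right (norm_pos_iff.mpr hα)
  have hb' : (b : ℂ) ≠ 0 := by exact_mod_cast hb.ne'
  have hcontract : ∀ {β : ℂ}, ‖β‖ ≤ b → ‖β / b‖ ≤ 1 := fun hβ => by
    rwa [norm_div, Complex.norm_of_nonneg hb.le, div_le_one hb]
  -- Both components are reparametrised so that they share the coefficient `b`.
  have hdisc := (hu.comp_mul (hcontract (le_max_left _ _)) (mul_div_cancel₀ α₁ hb')).prod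
    (hg.comp_mul (hcontract (le_max_right _ _)) (mul_div_cancel₀ α hb'))
  have hinj' : InjOn (fun ζ => (u (α₁ / b * ζ), g (α / b * ζ))) unitDisc := fun a ha b hb hab =>
    hinj.comp_mul_unitDisc (hcontract (le_max_left _ _))
      (div_ne_zero (hu.coeff_ne_zero hX₁) hb') ha hb (congrArg Prod.fst hab)
  calc hahn (D₁ ×ˢ D₂) (z₁, z₂) (X₁, X₂) ≤ ‖(b : ℂ)‖ := hdisc.hahn_le hinj'
    _ = b := Complex.norm_of_nonneg hb.le
    _ < max (hahn D₁ z₁ X₁) ‖α‖ + ε :=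
      max_lt (by linarith [le_max_left (hahn D₁ z₁ X₁) ‖α‖])
        (by linarith [le_max_right (hahn D₁ z₁ X₁) ‖α‖])

lemma hahn_prod_le_of_bounded {D₁ D₂ : Set ℂ} {z₁ z₂ X₂ α : ℂ} {g : ℂ → ℂ} {M : ℝ}
    (hD₁ : IsOpen D₁) (hz₁ : z₁ ∈ D₁) (hg : IsAnalyticDisc D₂ z₂ X₂ α g) (hX₂ : X₂ ≠ 0)
    (hM : ∀ ζ ∈ unitDisc, ‖g ζ‖ ≤ M) :
    hahn (D₁ ×ˢ D₂) (z₁, z₂) (0, X₂) ≤ ‖α‖ := by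
  set w := deriv g 0
  have hw : w ≠ 0 := hg.deriv_ne_zero hX₂
  obtain ⟨ρ, hρ, hball⟩ := Metric.isOpen_iff.mp hD₁ z₁ hz₁
  set K := M + ‖z₂‖ + ‖w‖
  have hK : 0 ≤ K := by
    have := (norm_nonneg _).trans (hM 0 zero_mem_unitDisc)
    positivity
  set δ : ℝ := ρ / (K + 1)
  have hδ : 0 < δ := by positivity
  have hδK : δ * K < ρ := by
    rw [div_mul_eq_mul_div, div_lt_iff₀ (by positivity)]
    nlinarith
  -- Graph trick: `h` has derivative `0` at `0`, and `h a = h b` together with `g a = g b`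
  -- forces `a = b`.
  set h : ℂ → ℂ := fun ζ => z₁ + δ * (g ζ - z₂ - ζ * w)
  have hh : IsAnalyticDisc D₁ z₁ 0 α h := by
    constructor
    case differentiableOn =>
      have := hg.differentiableOn
      fun_prop
    case mapsTo =>
      intro ζ hζ
      apply hball
      have hζw : ‖ζ * w‖ ≤ ‖w‖ := by
        rw [norm_mul]; exact mul_le_of_le_one_left (norm_nonneg w) (mem_unitDisc.mp hζ).le
      rw [mem_ball, dist_eq_norm, add_sub_cancel_left, norm_mul, Complex.norm_of_nonneg hδ.le]
      calc δ * ‖g ζ - z₂ - ζ * w‖ ≤ δ * K := by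
            gcongr
            exact (norm_sub_le _ _).trans (add_le_add ((norm_sub_le _ _).trans
              (add_le_add_left (hM ζ hζ) _)) hζw)
        _ < ρ := hδK
    case map_zero => simp [h, hg.map_zero]
    case smul_deriv =>
      have hd : HasDerivAt h (δ * (w - w)) 0 :=
        (((hg.differentiableAt.hasDerivAt.sub_const z₂).sub (hasDerivAt_mul_const w)).const_mul
          (δ : ℂ)).const_add z₁
      rw [hd.deriv, sub_self, mul_zero, smul_zero]
  refine (hh.prod hg).hahn_le fun a _ b _ hab => ?_
  obtain ⟨h₁, h₂⟩ := Prod.mk.inj hab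
  simp only [h, h₂] at h₁
  have : (δ : ℂ) * w * (b - a) = 0 := by linear_combination h₁
  exact (sub_eq_zero.mp ((mul_eq_zero.mp this).resolve_left
    (mul_ne_zero (by exact_mod_cast hδ.ne') hw))).symm

lemma hahn_prod_le_of_fst_eq_zero {D₁ D₂ : Set ℂ} {z₁ z₂ X₂ α : ℂ} {g : ℂ → ℂ}
    (hD₁ : IsOpen D₁) (hz₁ : z₁ ∈ D₁) (hg : IsAnalyticDisc D₂ z₂ X₂ α g) (hX₂ : X₂ ≠ 0) :
    hahn (D₁ ×ˢ D₂) (z₁, z₂) (0, X₂) ≤ ‖α‖ := by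
  refine (le_iff_forall_one_lt_le_mul₀ (norm_nonneg α)).mpr fun s hs => ?_
  have hs₀ : 0 < s := one_pos.trans hs
  have hs' : (s : ℂ) ≠ 0 := by exact_mod_cast hs₀.ne'
  -- Shrinking `g` to `ζ ↦ g (ζ / s)` makes it bounded on the disc.
  obtain ⟨M, hM⟩ := hg.differentiableOn.continuousOn.exists_bound_comp_mul
    (inv_nonneg.mpr hs₀.le) (inv_lt_one_of_one_lt₀ hs)
  have hgs := hg.comp_mul (c := ((s⁻¹ : ℝ) : ℂ)) (β := α * s)
    (by rw [Complex.norm_of_nonneg (inv_nonneg.mpr hs₀.le)]; exact inv_le_one_of_one_le₀ hs.le)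
    (by push_cast; field_simp)
  simpa [norm_mul, abs_of_pos hs₀] using
    hahn_prod_le_of_bounded hD₁ hz₁ hgs hX₂ hM

lemma hahn_prod_le_of_isAnalyticDisc {D₁ D₂ : Set ℂ} {z X : ℂ × ℂ} {α : ℂ}
    {f : ℂ → ℂ × ℂ} (hD₁ : IsOpen D₁) (hD₂ : IsOpen D₂)
    (h₁ : hahn D₁ z.1 X.1 ≤ kobayashi D₁ z.1 X.1) (hf : IsAnalyticDisc (D₁ ×ˢ D₂) z X α f) :
    hahn (D₁ ×ˢ D₂) z X ≤ ‖α‖ := by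
  obtain ⟨hz₁, -⟩ := hf.mem
  rcases eq_or_ne X.1 0 with hX₁ | hX₁
  · rcases eq_or_ne X.2 0 with hX₂ | hX₂
    · rw [show X = 0 from Prod.ext hX₁ hX₂, hahn_zero (hD₁.prod hD₂) hf.mem]
      exact norm_nonneg α
    · simpa [← hX₁] using hahn_prod_le_of_fst_eq_zero hD₁ hz₁ hf.snd hX₂
  · calc hahn (D₁ ×ˢ D₂) z X ≤ max (hahn D₁ z.1 X.1) ‖α‖ :=
          hahn_prod_le_max hD₁ hz₁ hX₁ hf.snd (hf.fst.coeff_ne_zero hX₁)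
      _ ≤ ‖α‖ := max_le (h₁.trans hf.fst.kobayashi_le) le_rfl

/-- If `h_{D₁} ≡ κ_{D₁}` on a domain `D₁ ⊆ ℂ`, then for every domain `D₂ ⊆ ℂ`,
`h_{D₁×D₂} ≡ κ_{D₁×D₂}`. -/
theorem stmt4 (D₁ : Set ℂ) (hD₁ : IsOpen D₁ ∧ IsConnected D₁)
    (heq : ∀ z ∈ D₁, ∀ X : ℂ, hahn D₁ z X = kobayashi D₁ z X) :
    ∀ D₂ : Set ℂ, IsOpen D₂ ∧ IsConnected D₂ →
      ∀ z ∈ D₁ ×ˢ D₂, ∀ X : ℂ × ℂ,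
        hahn (D₁ ×ˢ D₂) z X = kobayashi (D₁ ×ˢ D₂) z X := by
  rintro D₂ ⟨hD₂, -⟩ z hz X
  have hne := exists_isAnalyticDisc_injOn (hD₁.1.prod hD₂) hz X
  refine le_antisymm ?_ (kobayashi_le_hahn hne)
  obtain ⟨α, f, hf, -⟩ := hne
  exact le_kobayashi ⟨α, f, hf⟩ fun _ _ hg =>
    hahn_prod_le_of_isAnalyticDisc hD₁.1 hD₂ (heq z.1 hz.1 X.1).le hg
end
end

section
/- Let c ∈ (−1,0) and put ψ := h_c, where h_a(z) := (z − a)/(1 − conj(a)·z). For a ∈ E let φ_a := h_{−a} ∘ (−id) ∘ h_{h_a(ψ(a))} ∘ h_a, which is the automorphism of E swapping a and ψ(a) (φ_a(a) = ψ(a), φ_a(ψ(a)) = a, φ_a ∘ φ_a = id). Then φ_a'(a) = −ψ'(a) if and only if a ∈ ℝ. -/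
open Set Metric Complex

noncomputable section

/-- An automorphism of the unit disc: a biholomorphic map of `E` onto itself. -/
def IsDiscAut (φ : ℂ → ℂ) : Prop :=
  DifferentiableOn ℂ φ unitDisc ∧ MapsTo φ unitDisc unitDisc ∧
  ∃ ψ : ℂ → ℂ, DifferentiableOn ℂ ψ unitDisc ∧ MapsTo ψ unitDisc unitDisc ∧
    (∀ z ∈ unitDisc, ψ (φ z) = z) ∧ (∀ z ∈ unitDisc, φ (ψ z) = z)

/-- The Möbius automorphism `h_a(z) = (z - a)/(1 - conj(a)·z)` of the unit disc. -/
def hMob (a z : ℂ) : ℂ := (z - a) / (1 - (starRingEnd ℂ) a * z)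


/-! Write `b = h_a(ψ(a)) = c(a² - 1)/D` with `D = 1 - |a|² - c(a - ā)`. The chain rule gives
`φ_a'(a) = -(1 - |b|²)/(1 + ā b)²`, and the identity `|D|² - c²|a² - 1|² = (1 - c²)(1 - |a|²)²`
turns this into `φ_a'(a) = -ψ'(a) · D / D̄`. Hence the condition holds iff `D` is real, i.e. iff
`Im D = -2c Im a` vanishes. -/

open ComplexConjugate

lemma hasDerivAt_hMob {w p : ℂ} (h : 1 - conj w * p ≠ 0) :
    HasDerivAt (hMob w) ((1 - conj w * w) / (1 - conj w * p) ^ 2) p := by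
  have := ((hasDerivAt_id' p).sub_const w).div
    (((hasDerivAt_id' p).const_mul (conj w)).const_sub 1) h
  exact this.congr_deriv (by ring)

lemma hMob_self (a : ℂ) : hMob a a = 0 := by simp [hMob]

lemma hMob_zero (b : ℂ) : hMob b 0 = -b := by simp [hMob]

lemma one_sub_conj_mul_ne_zero {w p : ℂ} (hw : ‖w‖ < 1) (hp : ‖p‖ ≤ 1) :
    1 - conj w * p ≠ 0 :=
  sub_ne_zero.mpr <| ne_of_apply_ne norm <| by
    rw [norm_one, norm_mul, norm_conj]
    exact (mul_lt_one_of_nonneg_of_lt_one_left (norm_nonneg w) hw hp).ne'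

lemma deriv_hMob_ne_zero {w p : ℂ} (hw : ‖w‖ < 1) (h : 1 - conj w * p ≠ 0) :
    deriv (hMob w) p ≠ 0 := by
  rw [(hasDerivAt_hMob h).deriv]
  exact div_ne_zero (one_sub_conj_mul_ne_zero hw hw.le) (pow_ne_zero 2 h)

lemma hasDerivAt_hMob_neg_hMob_comp_hMob {a b : ℂ} (ha : 1 - conj a * a ≠ 0)
    (hb : 1 + conj a * b ≠ 0) :
    HasDerivAt (fun z => hMob (-a) (-(hMob b (hMob a z))))
      (-(1 - conj b * b) / (1 + conj a * b) ^ 2) a := by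
  have hin : HasDerivAt (hMob a) (1 / (1 - conj a * a)) a :=
    (hasDerivAt_hMob ha).congr_deriv (by field_simp)
  have hmid : HasDerivAt (hMob b) (1 - conj b * b) (hMob a a) := by
    simpa [hMob_self] using hasDerivAt_hMob (w := b) (p := 0) (by simp)
  have hout : HasDerivAt (hMob (-a)) ((1 - conj a * a) / (1 + conj a * b) ^ 2)
      (-hMob b (hMob a a)) := by
    simpa [hMob_self, hMob_zero, sub_eq_add_neg] using
      hasDerivAt_hMob (w := -a) (p := b) (by simpa [sub_eq_add_neg] using hb)
  refine (hout.comp a (hmid.comp a hin).neg).congr_deriv ?_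
  field_simp

def swapDenom (c : ℝ) (a : ℂ) : ℂ := 1 - conj a * a - c * (a - conj a)

lemma re_swapDenom (c : ℝ) (a : ℂ) : (swapDenom c a).re = 1 - ‖a‖ ^ 2 := by
  simp [swapDenom, Complex.sq_norm, normSq_apply]

lemma im_swapDenom (c : ℝ) (a : ℂ) : (swapDenom c a).im = -2 * c * a.im := by
  simp only [swapDenom, sub_im, one_im, mul_im, conj_re, conj_im, ofReal_re, ofReal_im, sub_re]
  ring

lemma conj_swapDenom_mul_swapDenom_sub (c : ℝ) (a : ℂ) :
    conj (swapDenom c a) * swapDenom c a - c ^ 2 * (conj a ^ 2 - 1) * (a ^ 2 - 1) =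
      (1 - conj a * a) ^ 2 * (1 - c ^ 2) := by
  simp only [swapDenom, map_sub, map_one, map_mul, conj_conj, conj_ofReal]
  ring

lemma swapDenom_ne_zero (c : ℝ) {a : ℂ} (ha : ‖a‖ < 1) : swapDenom c a ≠ 0 := fun h => by
  have := re_swapDenom c a
  rw [h, zero_re] at this
  nlinarith [norm_nonneg a]

lemma hMob_hMob_ofReal (c : ℝ) {a : ℂ} (hca : 1 - c * a ≠ 0) :
    hMob a (hMob c a) = c * (a ^ 2 - 1) / swapDenom c a := by
  rw [hMob, hMob, swapDenom, conj_ofReal, ← mul_div_mul_right _ _ hca, sub_mul, sub_mul,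
    div_mul_cancel₀ _ hca, mul_assoc, div_mul_cancel₀ _ hca]
  ring_nf

lemma deriv_swap_mul_conj_swapDenom {c : ℝ} (hc : |c| < 1) {a : ℂ} (ha : ‖a‖ < 1) :
    deriv (fun z => hMob (-a) (-(hMob (hMob a (hMob c a)) (hMob a z)))) a
        * conj (swapDenom c a) = -deriv (hMob c) a * swapDenom c a := by
  have hD := swapDenom_ne_zero c ha
  have haa := one_sub_conj_mul_ne_zero ha ha.le
  have hca := one_sub_conj_mul_ne_zero (w := c) (by simpa using hc) ha.le
  rw [conj_ofReal] at hca
  have hDc : conj (swapDenom c a) ≠ 0 := (map_ne_zero _).mpr hD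
  have hb := hMob_hMob_ofReal c hca
  have hb' : 1 + conj a * hMob a (hMob c a) = (1 - conj a * a) * (1 - c * a) / swapDenom c a := by
    rw [hb]; field_simp; rw [swapDenom]; ring
  have hbc : conj (hMob a (hMob c a)) = c * (conj a ^ 2 - 1) / conj (swapDenom c a) := by
    rw [hb]; simp
  have hb0 : 1 + conj a * hMob a (hMob c a) ≠ 0 := by
    rw [hb']
    exact div_ne_zero (mul_ne_zero haa hca) hD
  rw [(hasDerivAt_hMob_neg_hMob_comp_hMob haa hb0).deriv,
    (hasDerivAt_hMob (w := c) (by rwa [conj_ofReal])).deriv, hb', hbc, hb,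
    conj_ofReal]
  field_simp
  rw [conj_swapDenom_mul_swapDenom_sub]

/-- For `c ∈ (-1,0)`, `ψ := h_c`, and `a ∈ E`, the involutive automorphism
`φ_a := h_{-a} ∘ (-id) ∘ h_{h_a(ψ(a))} ∘ h_a` swapping `a` and `ψ(a)` satisfies
`φ_a'(a) = -ψ'(a)` iff `a ∈ ℝ`. -/
theorem stmt15 (c : ℝ) (hc : c ∈ Set.Ioo (-1 : ℝ) 0) (a : ℂ) (ha : a ∈ unitDisc) :
    deriv (fun z => hMob (-a) (-(hMob (hMob a (hMob (c : ℂ) a)) (hMob a z)))) a =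
      -deriv (hMob (c : ℂ)) a ↔ a.im = 0 := by
  obtain ⟨hc1, hc0⟩ := hc
  have hc' : |c| < 1 := abs_lt.mpr ⟨hc1, by linarith⟩
  have ha' : ‖a‖ < 1 := mem_ball_zero_iff.mp ha
  have hψ : deriv (hMob c) a ≠ 0 := by
    have hcn : ‖(c : ℂ)‖ < 1 := by simpa using hc'
    exact deriv_hMob_ne_zero hcn (one_sub_conj_mul_ne_zero hcn ha'.le)
  rw [← mul_left_inj' ((map_ne_zero conj).mpr (swapDenom_ne_zero c ha')),
    deriv_swap_mul_conj_swapDenom hc' ha', mul_right_inj' (neg_ne_zero.mpr hψ), eq_comm,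
    conj_eq_iff_im, im_swapDenom]
  simp [hc0.ne]
end
end

section
/- Let D₁, D₂ ⊆ ℂ be domains, θ ∈ (0,1), and f = (f₁,f₂) : E → D₁ × D₂ holomorphic with f₁'(0) = 0. Let 0 < d < dist(f₁(0), ∂D₁), assume f₂'(0) ≠ 0, and define h(z) := (f₂(θz) − f₂(0))/f₂'(0), M := max{|h(z)| : z ∈ closure(E)}, g₁(z) := f₁(0) + (d/(M+1))·(h(z) − θz), and g(z) := (g₁(z), f₂(θz)). Then g is an injective holomorphic map from E to D₁ × D₂ with g(0) = f(0) and g'(0) = θ·f'(0). -/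
/-!
The second coordinate f₂(θz) determines h(z), and then the first coordinate determines θz, so
`g` is injective. Since h'(0) = θ, the first coordinate has derivative 0 at the origin. On the
disc |h(z) - θz| ≤ M + θ < M + 1, so the first coordinate stays within distance d of f₁(0); the
ball of radius dist(f₁(0), ∂D₁) about f₁(0) is connected and misses ∂D₁, so it lies in D₁.
-/

open Set Metric Complex

noncomputable section

theorem mem_of_dist_lt_infDist_frontier {E : Type*} [NormedAddCommGroup E] [NormedSpace ℝ E]
    {s : Set E} (hs : IsOpen s) {x y : E} (hx : x ∈ s)
    (hy : dist y x < infDist x (frontier s)) : y ∈ s := by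
  have hball : ball x (infDist x (frontier s)) ⊆ s := by
    refine (convex_ball x _).isPreconnected.subset_of_closure_inter_subset hs
      ⟨x, mem_ball_self (dist_nonneg.trans_lt hy), hx⟩ ?_
    rintro z ⟨hz_cl, hz_ball⟩
    by_contra hz
    have hz_fr : z ∈ frontier s := ⟨hz_cl, by rwa [hs.interior_eq]⟩
    exact (infDist_le_dist_of_mem hz_fr).not_gt (mem_ball'.1 hz_ball)
  exact hball hy

theorem injective_add_mul_sub_mul_prodMk {𝕜 β : Type*} [Field 𝕜] {a c θ : 𝕜} (hc : c ≠ 0)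
    (hθ : θ ≠ 0) (k : β → 𝕜) (v : 𝕜 → β) :
    Function.Injective fun z => (a + c * (k (v z) - θ * z), v z) := by
  intro x y hxy
  obtain ⟨h₁, h₂ : v x = v y⟩ := Prod.ext_iff.1 hxy
  simp only [h₂, add_right_inj, mul_right_inj' hc, sub_right_inj, mul_right_inj' hθ] at h₁
  exact h₁

theorem hasDerivAt_comp_const_mul {𝕜 : Type*} [NontriviallyNormedField 𝕜] {f : 𝕜 → 𝕜}
    {θ x : 𝕜} (hf : DifferentiableAt 𝕜 f (θ * x)) :
    HasDerivAt (fun z => f (θ * z)) (deriv f (θ * x) * θ) x := by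
  simpa [Function.comp_def] using hf.hasDerivAt.comp x ((hasDerivAt_id x).const_mul θ)

theorem hasDerivAt_normalize_comp_const_mul {𝕜 : Type*} [NontriviallyNormedField 𝕜]
    {f : 𝕜 → 𝕜} (θ : 𝕜) (hf : DifferentiableAt 𝕜 f 0) (hf' : deriv f 0 ≠ 0) :
    HasDerivAt (fun z => (f (θ * z) - f 0) / deriv f 0) θ 0 := by
  have hcomp := hasDerivAt_comp_const_mul (x := 0) (θ := θ) (by rwa [mul_zero])
  rw [mul_zero] at hcomp
  simpa [mul_div_cancel_left₀ θ hf'] using (hcomp.sub_const (f 0)).div_const (deriv f 0)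

theorem HasDerivAt.const_add_const_mul_sub_const_mul {𝕜 : Type*} [NontriviallyNormedField 𝕜]
    {h : 𝕜 → 𝕜} {θ x : 𝕜} (hh : HasDerivAt h θ x) (a c : 𝕜) :
    HasDerivAt (fun z => a + c * (h z - θ * z)) 0 x := by
  simpa using ((hh.sub ((hasDerivAt_id x).const_mul θ)).const_mul c).const_add a

theorem norm_le_sSup_image_norm {α F : Type*} [TopologicalSpace α] [SeminormedAddGroup F]
    {K : Set α} (hK : IsCompact K) {f : α → F} (hf : ContinuousOn f K) {x : α} (hx : x ∈ K) :
    ‖f x‖ ≤ sSup ((fun z => ‖f z‖) '' K) :=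
  le_csSup (hK.bddAbove_image hf.norm) (mem_image_of_mem _ hx)

theorem mapsTo_mul_closedBall_unitDisc {θ : ℂ} (hθ : ‖θ‖ < 1) :
    MapsTo (θ * ·) (closedBall 0 1) unitDisc := by
  intro z hz
  rw [unitDisc, mem_ball_zero_iff, norm_mul]
  exact (mul_le_of_le_one_right (norm_nonneg θ) (mem_closedBall_zero_iff.1 hz)).trans_lt hθ

theorem norm_div_add_one_mul_sub_lt {d M : ℝ} (hd : 0 < d) {w ζ : ℂ} (hw : ‖w‖ ≤ M)
    (hζ : ‖ζ‖ < 1) : ‖((d / (M + 1) : ℝ) : ℂ) * (w - ζ)‖ < d := by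
  have hM : 0 < M + 1 := by linarith [(norm_nonneg w).trans hw]
  have hwζ : ‖w - ζ‖ < M + 1 := (norm_sub_le w ζ).trans_lt (by linarith)
  rw [norm_mul, Complex.norm_real, Real.norm_of_nonneg (div_pos hd hM).le]
  calc d / (M + 1) * ‖w - ζ‖ < d / (M + 1) * (M + 1) := by gcongr
    _ = d := div_mul_cancel₀ d hM.ne'

theorem stmt18_general (D₁ D₂ : Set ℂ) (hD₁ : IsOpen D₁ ∧ IsConnected D₁)
    (θ : ℝ) (hθ : θ ∈ Set.Ioo (0 : ℝ) 1) (f₁ f₂ : ℂ → ℂ)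
    (hf₂ : DifferentiableOn ℂ f₂ unitDisc)
    (hf₁m : MapsTo f₁ unitDisc D₁) (hf₂m : MapsTo f₂ unitDisc D₂)
    (hf₁' : deriv f₁ 0 = 0) (hf₂' : deriv f₂ 0 ≠ 0)
    (d : ℝ) (hd0 : 0 < d) (hd : d < Metric.infDist (f₁ 0) (frontier D₁))
    (h : ℂ → ℂ) (hh : h = fun z => (f₂ ((θ : ℂ) * z) - f₂ 0) / deriv f₂ 0)
    (M : ℝ) (hM : M = sSup ((fun z => ‖h z‖) '' Metric.closedBall 0 1))
    (g : ℂ → ℂ × ℂ)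
    (hg : g = fun z =>
      (f₁ 0 + ((d / (M + 1) : ℝ) : ℂ) * (h z - (θ : ℂ) * z), f₂ ((θ : ℂ) * z))) :
    DifferentiableOn ℂ g unitDisc ∧ InjOn g unitDisc ∧
      MapsTo g unitDisc (D₁ ×ˢ D₂) ∧ g 0 = (f₁ 0, f₂ 0) ∧
      deriv g 0 = ((θ : ℂ) * deriv f₁ 0, (θ : ℂ) * deriv f₂ 0) := by
  obtain ⟨hθ0, hθ1⟩ := hθ
  have hθ_norm : ‖(θ : ℂ)‖ < 1 := by rwa [Complex.norm_real, Real.norm_of_nonneg hθ0.le]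
  have hmaps_closed := mapsTo_mul_closedBall_unitDisc hθ_norm
  have hmaps := hmaps_closed.mono_left ball_subset_closedBall
  have hF : DifferentiableOn ℂ (fun z => f₂ (θ * z)) (closedBall 0 1) :=
    hf₂.comp (differentiableOn_id.const_mul _) hmaps_closed
  have hh_diff : DifferentiableOn ℂ h (closedBall 0 1) := hh ▸ (hF.sub_const _).div_const _
  have hhM : ∀ z ∈ closedBall (0 : ℂ) 1, ‖h z‖ ≤ M := fun z hz =>
    hM ▸ norm_le_sSup_image_norm (isCompact_closedBall 0 1) hh_diff.continuousOn hz
  have hM0 : 0 ≤ M := by simpa [hh] using hhM 0 (mem_closedBall_self zero_le_one)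
  have hf₂0 : DifferentiableAt ℂ f₂ 0 := hf₂.differentiableAt (ball_mem_nhds 0 one_pos)
  have hh_deriv : HasDerivAt h θ 0 := hh ▸ hasDerivAt_normalize_comp_const_mul _ hf₂0 hf₂'
  subst hg
  refine ⟨?_, ?_, ?_, by simp [hh], ?_⟩
  · exact ((((hh_diff.mono ball_subset_closedBall).sub (differentiableOn_id.const_mul _)).const_mul
      _).const_add _).prodMk (hF.mono ball_subset_closedBall)
  · have hc : ((d / (M + 1) : ℝ) : ℂ) ≠ 0 := by exact_mod_cast (by positivity : d / (M + 1) ≠ 0)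
    subst hh
    exact (injective_add_mul_sub_mul_prodMk hc (ofReal_ne_zero.2 hθ0.ne')
      (fun w => (w - f₂ 0) / deriv f₂ 0) (fun z => f₂ (θ * z))).injOn
  · intro z hz
    refine ⟨mem_of_dist_lt_infDist_frontier hD₁.1 (hf₁m (mem_ball_self one_pos)) ?_,
      hf₂m (hmaps hz)⟩
    rw [dist_eq_norm, add_sub_cancel_left]
    exact (norm_div_add_one_mul_sub_lt hd0 (hhM z (ball_subset_closedBall hz))
      (mem_ball_zero_iff.1 (hmaps hz))).trans hd
  · have hg₂ := hasDerivAt_comp_const_mul (θ := (θ : ℂ)) (x := 0) (by rwa [mul_zero])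
    rw [((hh_deriv.const_add_const_mul_sub_const_mul _ _).prodMk hg₂).deriv, hf₁', mul_zero,
      mul_comm]

/-- The injectivity construction in the case `f₁'(0) = 0` of Proposition 2: with
`0 < d < dist(f₁(0), ∂D₁)`, `h(z) := (f₂(θz) - f₂(0))/f₂'(0)`,
`M := max {|h(z)| : z ∈ closure E}`,
`g₁(z) := f₁(0) + (d/(M+1))·(h(z) - θz)`, and `g := (g₁, f₂(θ·))`, the map `g` is
an injective holomorphic map `E → D₁ × D₂` with `g(0) = f(0)` and `g'(0) = θ·f'(0)`. -/
theorem stmt18 (D₁ D₂ : Set ℂ) (hD₁ : IsOpen D₁ ∧ IsConnected D₁)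
    (hD₂ : IsOpen D₂ ∧ IsConnected D₂)
    (θ : ℝ) (hθ : θ ∈ Set.Ioo (0 : ℝ) 1) (f₁ f₂ : ℂ → ℂ)
    (hf₁ : DifferentiableOn ℂ f₁ unitDisc) (hf₂ : DifferentiableOn ℂ f₂ unitDisc)
    (hf₁m : MapsTo f₁ unitDisc D₁) (hf₂m : MapsTo f₂ unitDisc D₂)
    (hf₁' : deriv f₁ 0 = 0) (hf₂' : deriv f₂ 0 ≠ 0)
    (d : ℝ) (hd0 : 0 < d) (hd : d < Metric.infDist (f₁ 0) (frontier D₁))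
    (h : ℂ → ℂ) (hh : h = fun z => (f₂ ((θ : ℂ) * z) - f₂ 0) / deriv f₂ 0)
    (M : ℝ) (hM : M = sSup ((fun z => ‖h z‖) '' Metric.closedBall 0 1))
    (g : ℂ → ℂ × ℂ)
    (hg : g = fun z =>
      (f₁ 0 + ((d / (M + 1) : ℝ) : ℂ) * (h z - (θ : ℂ) * z), f₂ ((θ : ℂ) * z))) :
    DifferentiableOn ℂ g unitDisc ∧ InjOn g unitDisc ∧
      MapsTo g unitDisc (D₁ ×ˢ D₂) ∧ g 0 = (f₁ 0, f₂ 0) ∧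
      deriv g 0 = ((θ : ℂ) * deriv f₁ 0, (θ : ℂ) * deriv f₂ 0) :=
  stmt18_general D₁ D₂ hD₁ θ hθ f₁ f₂ hf₂ hf₁m hf₂m hf₁' hf₂' d hd0 hd h hh M hM g hg
end
end
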